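/- arXiv:2411.03681 — 2 statements merged into one kernel-verified Lean document; each statement's English description precedes it below -/
import Mathlib

section
/- For all integers a, b and every natural number n ≥ 2, the identity n·T^{a,b}_n = b(2n−1)·T^{a,b}_{n−1} − (b² − 4a²)(n−1)·T^{a,b}_{n−2} holds in ℤ. (In particular, for a = b = 1: n·T_n = (2n−1)·T_{n−1} + (3n−3)·T_{n−2}.) -/
open Polynomial

/-- The generalized central trinomial coefficient `T^{a,b}_n`:
the coefficient of `X^n` in `(a + bX + aX^2)^n`. -/
noncomputable def genTrinomial (a b : ℤ) (n : ℕ) : ℤ :=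
  ((C a + C b * X + C a * X ^ 2) ^ n).coeff n

/-- The generalized Motzkin number `M^{a,b}_n`:
the coefficient of `X^n` in `(a + bX + aX^2)^n * (1 - X^2)`. -/
noncomputable def genMotzkin (a b : ℤ) (n : ℕ) : ℤ :=
  (((C a + C b * X + C a * X ^ 2) ^ n) * (1 - X ^ 2)).coeff n

/-!
With `L = a X⁻¹ + b + a X` and the Euler operator `θ = X d/dX`, one has `θ² L = L - b` and
`(θ L)² = (L - b)² - 4a²`, hence
`θ (L^(n-1) θL) = n L^n - (2n-1) b L^(n-1) + (n-1)(b² - 4a²) L^(n-2)`.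
The constant term of any `θ G` vanishes, which gives the recurrence for `T_n = CT(L^n)`.
Multiplying through by `X^n` turns this into an identity of ordinary polynomials in
`P = X L = a + bX + aX²`, read off at the coefficient of `X^n`.
-/

theorem coeff_X_mul_derivative {R : Type*} [Semiring R] (p : R[X]) (m : ℕ) :
    (X * derivative p).coeff m = m * p.coeff m := by
  cases m with
  | zero => simp
  | succ m => rw [coeff_X_mul, coeff_derivative, ← Nat.cast_succ, Nat.cast_comm]

section PalindromicQuadratic

variable {R : Type*} [CommRing R]

noncomputable def palindromicQuadratic (a b : R) : R[X] := C a + C b * X + C a * X ^ 2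

theorem derivative_palindromicQuadratic (a b : R) :
    derivative (palindromicQuadratic a b) = C b + C (2 * a) * X := by
  simp only [palindromicQuadratic, derivative_add, derivative_C, derivative_C_mul_X,
    derivative_C_mul_X_pow, map_mul, map_ofNat, Nat.cast_ofNat]
  ring

/-- The polynomial `X^(m+2) · L^(m+1) θL`, where `L = a X⁻¹ + b + a X` and `θ = X d/dX`. -/
noncomputable def trinomialCertificate (a b : R) (m : ℕ) : R[X] :=
  palindromicQuadratic a b ^ (m + 1) *
    (X * derivative (palindromicQuadratic a b) - palindromicQuadratic a b)

theorem X_mul_derivative_trinomialCertificate (a b : R) (m : ℕ) :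
    X * derivative (trinomialCertificate a b m) - C ((m : R) + 2) * trinomialCertificate a b m =
      C ((m : R) + 2) * palindromicQuadratic a b ^ (m + 2)
        - C ((2 * m + 3) * b) * X * palindromicQuadratic a b ^ (m + 1)
        + C ((m + 1) * (b ^ 2 - 4 * a ^ 2)) * X ^ 2 * palindromicQuadratic a b ^ m := by
  simp only [trinomialCertificate, derivative_mul, derivative_pow_succ, derivative_sub,
    derivative_X, derivative_palindromicQuadratic, derivative_add, derivative_C, one_mul, zero_add]
  simp only [palindromicQuadratic, map_add, map_mul, map_natCast, map_ofNat, map_pow, map_sub,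
    map_one]
  ring

theorem palindromicQuadratic_pow_coeff_recurrence (a b : R) (m : ℕ) :
    ((m : R) + 2) * (palindromicQuadratic a b ^ (m + 2)).coeff (m + 2) =
      (2 * m + 3) * b * (palindromicQuadratic a b ^ (m + 1)).coeff (m + 1)
        - (m + 1) * (b ^ 2 - 4 * a ^ 2) * (palindromicQuadratic a b ^ m).coeff m := by
  have h := congrArg (coeff · (m + 2)) (X_mul_derivative_trinomialCertificate a b m)
  rw [coeff_sub, coeff_X_mul_derivative, coeff_C_mul, Nat.cast_add, Nat.cast_two, sub_self] at h
  simp only [coeff_add, coeff_sub, coeff_C_mul, mul_assoc, coeff_X_mul, coeff_X_pow_mul',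
    if_pos (Nat.le_add_left 2 m), Nat.add_sub_cancel] at h
  linear_combination -h

end PalindromicQuadratic

theorem genTrinomial_eq_coeff (a b : ℤ) (n : ℕ) :
    genTrinomial a b n = (palindromicQuadratic a b ^ n).coeff n := rfl

theorem stmt2 (a b : ℤ) (n : ℕ) (hn : 2 ≤ n) :
    (n : ℤ) * genTrinomial a b n =
      b * (2 * (n : ℤ) - 1) * genTrinomial a b (n - 1)
        - (b ^ 2 - 4 * a ^ 2) * ((n : ℤ) - 1) * genTrinomial a b (n - 2) := by
  obtain ⟨m, rfl⟩ := Nat.exists_eq_add_of_le' hn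
  simp only [genTrinomial_eq_coeff, Nat.add_sub_cancel, Nat.add_succ_sub_one]
  push_cast
  linear_combination palindromicQuadratic_pow_coeff_recurrence a b m
end

section
/- For all integers a, b and every natural number n ≥ 2, the identity (n+2)·M^{a,b}_n = b(2n+1)·M^{a,b}_{n−1} − (b² − 4a²)(n−1)·M^{a,b}_{n−2} holds in ℤ. (In particular, for a = b = 1: (n+2)·M_n = (2n+1)·M_{n−1} + (3n−3)·M_{n−2}.) -/
open Polynomial

/-!
Creative telescoping. Write `P = a + bX + aX²` and `N = n`. An explicit `Q = P^(N-1) S`, with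
`S` of degree 4, satisfies
`N ((N + 2) P^N - b(2N + 1) X P^(N-1) + (b² - 4a²)(N - 1) X² P^(N-2)) (1 - X²) = X Q' - N Q`.
On the right the coefficient of `X^N` is `N q_N - N q_N = 0`; on the left it is `N` times the
difference of the two sides of the recurrence. The lemmas below are indexed by `m = N - 2`.
-/

variable {R : Type*} [CommRing R]

theorem coeff_X_mul_derivative_sub_C_mul_self (Q : R[X]) (n : ℕ) :
    (X * derivative Q - C (n : R) * Q).coeff n = 0 := by
  cases n with
  | zero => simp
  | succ k =>
    rw [coeff_sub, coeff_X_mul, coeff_derivative, coeff_C_mul]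
    push_cast
    ring

noncomputable def trinomialPoly (a b : R) : R[X] :=
  C a + C b * X + C a * X ^ 2

theorem genMotzkin_eq_coeff (a b : ℤ) (n : ℕ) :
    genMotzkin a b n = (trinomialPoly a b ^ n * (1 - X ^ 2)).coeff n :=
  rfl

noncomputable def motzkinCertificate (a b : R) (m : ℕ) : R[X] :=
  trinomialPoly a b ^ (m + 1) *
    (C (-(a * ((m : R) + 4))) + C (-(2 * b)) * X + C (2 * a * ((m : R) + 1)) * X ^ 2
      + C (-(a * ((m : R) + 2))) * X ^ 4)

theorem motzkin_telescoping (a b : R) (m : ℕ) :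
    C ((m + 2 : ℕ) : R) *
        (C ((m : R) + 4) * (trinomialPoly a b ^ (m + 2) * (1 - X ^ 2))
          - C (b * (2 * (m : R) + 5)) * (X * (trinomialPoly a b ^ (m + 1) * (1 - X ^ 2)))
          + C ((b ^ 2 - 4 * a ^ 2) * ((m : R) + 1)) *
              (X ^ 2 * (trinomialPoly a b ^ m * (1 - X ^ 2)))) =
      X * derivative (motzkinCertificate a b m)
        - C ((m + 2 : ℕ) : R) * motzkinCertificate a b m := by
  simp only [motzkinCertificate, trinomialPoly, derivative_mul, derivative_pow, derivative_C,
    derivative_X, derivative_one, derivative_ofNat, derivative_natCast, Nat.add_sub_cancel,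
    map_mul, map_add, map_sub, map_neg, map_ofNat, map_natCast, map_one, map_pow, Nat.cast_add,
    Nat.cast_one, Nat.cast_ofNat]
  ring

theorem stmt3 (a b : ℤ) (n : ℕ) (hn : 2 ≤ n) :
    ((n : ℤ) + 2) * genMotzkin a b n =
      b * (2 * (n : ℤ) + 1) * genMotzkin a b (n - 1)
        - (b ^ 2 - 4 * a ^ 2) * ((n : ℤ) - 1) * genMotzkin a b (n - 2) := by
  obtain ⟨m, rfl⟩ : ∃ m, n = m + 2 := ⟨n - 2, by omega⟩
  have h := congrArg (fun p => coeff p (m + 2)) (motzkin_telescoping a b m)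
  rw [coeff_X_mul_derivative_sub_C_mul_self] at h
  simp only [coeff_C_mul, coeff_add, coeff_sub, coeff_X_mul, coeff_X_pow_mul] at h
  have hrec := (mul_eq_zero.mp h).resolve_left (by positivity)
  simp only [genMotzkin_eq_coeff, Nat.add_sub_cancel]
  push_cast
  linear_combination hrec
end
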